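/- arXiv:1602.03367 — 2 statements merged into one kernel-verified Lean document; each statement's English description precedes it below -/
import Mathlib

section
/- (Non-asymptotic representation) Under the setting above, with C a nonempty convex subset of X, F proper K-convex, G proper S-convex, A := C ∩ G⁻¹(−S), A ∩ dom F ≠ ∅, and assuming the Slater condition: there exists x̄ ∈ C ∩ dom F with G(x̄) ∈ −int S; then epi_K(F + I_A)* = ⋃_{T ∈ L₊(S,K)} epi_K(F + I_C + T∘G)*, without closure. -/
open Set Pointwise Topology

def wSupElems {Y : Type*} [AddCommGroup Y] [TopologicalSpace Y] (K M : Set Y) : Set Y :=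
  {w | (∀ v ∈ M, w - v ∉ -(interior K)) ∧
       ∀ u : Y, u - w ∈ -(interior K) → ∃ v ∈ M, u - v ∈ -(interior K)}

def epiConj {X Y : Type*} [AddCommGroup X] [Module ℝ X] [TopologicalSpace X]
    [AddCommGroup Y] [Module ℝ Y] [TopologicalSpace Y]
    (K : Set Y) (H : X → Y) (domH : Set X) : Set ((X →L[ℝ] Y) × Y) :=
  {p | ∃ w ∈ wSupElems K ((fun x => p.1 x - H x) '' domH), p.2 - w ∈ K}

/-!
Both conjugate epigraphs are described pointwise: `(L, y) ∈ epi_K H*` iff `L x - H x - y ∉ int K`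
for every `x` in the domain, the required weak supremum above `y` being the point where the ray
`y - t • e` (`e ∈ int K`, `t ≥ 0`) enters the open set of points strictly dominated by the values
`L x - H x`. Then `⊇` is immediate, since `T (G x) ∈ -K` on `A`. For `⊆`, the pairs `(z, r)` for
which some `x` has `z - G x ∈ int S` and `r • e + (L x - F x - y) ∈ int K` form an open convex set
missing the origin; Slater's point makes a separating hyperplane non-vertical, and normalising it
gives a functional `ℓ ≥ 0` on `S` such that `T = ℓ (·) • e` is the multiplier.
-/

open Filter

theorem Real.nonneg_of_forall_pos_mul_add {a b : ℝ} (h : ∀ c > 0, 0 < c * b + a) :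
    0 ≤ a ∧ 0 ≤ b := by
  constructor
  · refine ge_of_tendsto (x := 𝓝[>] 0) ?_ (eventually_nhdsWithin_of_forall fun c hc => (h c hc).le)
    exact (Continuous.tendsto' (by fun_prop) 0 a (by simp)).mono_left nhdsWithin_le_nhds
  · refine ge_of_tendsto (x := atTop) (f := fun c => (c * b + a) / c) ?_
      ((eventually_gt_atTop 0).mono fun c hc => (div_pos (h c hc) hc).le)
    have : Tendsto (fun c : ℝ => b + a * c⁻¹) atTop (𝓝 b) := by
      simpa using tendsto_const_nhds.add (tendsto_inv_atTop_zero.const_mul a)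
    refine this.congr' ((eventually_gt_atTop 0).mono fun c hc => ?_)
    field_simp

section Cone

variable {Y : Type*} [AddCommGroup Y] [Module ℝ Y] {K : Set Y}

theorem Convex.add_subset_of_cone (hconv : Convex ℝ K) (hcone : ∀ c : ℝ, 0 < c → c • K ⊆ K) :
    K + K ⊆ K := by
  rintro _ ⟨a, ha, b, hb, rfl⟩
  have hmid : (2 : ℝ)⁻¹ • a + (2 : ℝ)⁻¹ • b ∈ K :=
    hconv ha hb (by norm_num) (by norm_num) (by norm_num)
  convert hcone 2 two_pos (smul_mem_smul_set hmid) using 1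
  module

theorem smul_mem_of_cone (hK0 : (0 : Y) ∈ K) (hcone : ∀ c : ℝ, 0 < c → c • K ⊆ K) {t : ℝ}
    (ht : 0 ≤ t) {x : Y} (hx : x ∈ K) : t • x ∈ K := by
  rcases ht.eq_or_lt with rfl | ht
  · rwa [zero_smul]
  · exact hcone t ht (smul_mem_smul_set hx)

variable [TopologicalSpace Y]

theorem Convex.interior_add_subset_of_cone [IsTopologicalAddGroup Y] (hconv : Convex ℝ K)
    (hcone : ∀ c : ℝ, 0 < c → c • K ⊆ K) : interior K + K ⊆ interior K :=
  interior_maximal ((add_subset_add_right interior_subset).trans (hconv.add_subset_of_cone hcone))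
    isOpen_interior.add_right

theorem smul_interior_subset_of_cone [ContinuousSMul ℝ Y] (hcone : ∀ c : ℝ, 0 < c → c • K ⊆ K)
    {c : ℝ} (hc : 0 < c) : c • interior K ⊆ interior K := by
  rw [← interior_smul₀ hc.ne']
  exact interior_mono (hcone c hc)

theorem eventually_smul_sub_mem_interior [IsTopologicalAddGroup Y] [ContinuousSMul ℝ Y]
    (hcone : ∀ c : ℝ, 0 < c → c • K ⊆ K) {e : Y} (he : e ∈ interior K) (u : Y) :
    ∀ᶠ t : ℝ in atTop, t • e - u ∈ interior K := by
  have hlim : Tendsto (fun t : ℝ => e - t⁻¹ • u) atTop (𝓝 e) := by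
    simpa using tendsto_const_nhds.sub ((tendsto_inv_atTop_zero (𝕜 := ℝ)).smul_const u)
  filter_upwards [hlim.eventually (isOpen_interior.mem_nhds he), eventually_gt_atTop 0]
    with t ht htpos
  convert smul_interior_subset_of_cone hcone htpos (smul_mem_smul_set ht) using 1
  rw [smul_sub, smul_smul, mul_inv_cancel₀ htpos.ne', one_smul]

end Cone

section WeakSupremum

variable {Y : Type*} [AddCommGroup Y] [TopologicalSpace Y] [IsTopologicalAddGroup Y]

def strictlyDominated (K M : Set Y) : Set Y :=
  {u | ∃ v ∈ M, v - u ∈ interior K}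

theorem isOpen_strictlyDominated (K M : Set Y) : IsOpen (strictlyDominated K M) := by
  have : strictlyDominated K M = ⋃ v ∈ M, (fun u => v - u) ⁻¹' interior K := by
    ext; simp [strictlyDominated]
  rw [this]
  exact isOpen_biUnion fun v _ => isOpen_interior.preimage (by fun_prop)

theorem mem_strictlyDominated_of_mem_closure {K M : Set Y} (hK : interior K + K ⊆ interior K)
    {w u : Y} (hw : w ∈ closure (strictlyDominated K M)) (hwu : w - u ∈ interior K) :
    u ∈ strictlyDominated K M := by
  have hnhds : {a | a - u ∈ interior K} ∈ 𝓝 w :=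
    (isOpen_interior.preimage (by fun_prop)).mem_nhds hwu
  obtain ⟨a, hau, v, hv, hva⟩ := mem_closure_iff_nhds.1 hw _ hnhds
  refine ⟨v, hv, ?_⟩
  rw [← sub_add_sub_cancel v a u]
  exact hK (add_mem_add hva (interior_subset hau))

variable [Module ℝ Y] [ContinuousSMul ℝ Y] {K : Set Y}

theorem exists_mem_wSupElems_sub_mem_iff (hconv : Convex ℝ K)
    (hcone : ∀ c : ℝ, 0 < c → c • K ⊆ K) (hK0 : (0 : Y) ∈ K) (hint : (interior K).Nonempty)
    {M : Set Y} (hM : M.Nonempty) (y : Y) :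
    (∃ w ∈ wSupElems K M, y - w ∈ K) ↔ ∀ v ∈ M, y - v ∉ -interior K := by
  have hadd := hconv.interior_add_subset_of_cone hcone
  simp only [wSupElems, Set.mem_neg, neg_sub, mem_ofPred_eq]
  constructor
  · rintro ⟨w, ⟨hw, -⟩, hyw⟩ v hv hvy
    refine hw v hv ?_
    rw [← sub_add_sub_cancel v y w]
    exact hadd (add_mem_add hvy hyw)
  intro h
  obtain ⟨e, he⟩ := hint
  obtain ⟨v₀, hv₀⟩ := hM
  set O := strictlyDominated K M
  set γ : ℝ → Y := fun t => y - t • e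
  have hray : IsPreconnected (γ '' Ici 0) := isPreconnected_Ici.image γ (by fun_prop)
  have hy : γ 0 ∉ O := by simpa [γ, O, strictlyDominated] using h
  have hmeets : (γ '' Ici 0 ∩ O).Nonempty := by
    obtain ⟨t, ht, ht0⟩ :=
      ((eventually_smul_sub_mem_interior hcone he (y - v₀)).and (eventually_ge_atTop 0)).exists
    refine ⟨γ t, mem_image_of_mem γ ht0, v₀, hv₀, ?_⟩
    convert ht using 1
    simp only [γ]; abel
  obtain ⟨w, ⟨hwO, t, ht, rfl⟩, hw⟩ :=
    not_subset.1 fun hsub => hy (hray.subset_of_closure_inter_subset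
      (isOpen_strictlyDominated K M) hmeets hsub (mem_image_of_mem γ self_mem_Ici))
  refine ⟨γ t, ⟨fun v hv hvw => hw ⟨v, hv, hvw⟩, fun u hu => ?_⟩, ?_⟩
  · exact mem_strictlyDominated_of_mem_closure hadd hwO hu
  · simpa [γ] using smul_mem_of_cone hK0 hcone ht (interior_subset he)

theorem mem_epiConj_iff {X : Type*} [AddCommGroup X] [Module ℝ X] [TopologicalSpace X]
    (hconv : Convex ℝ K) (hcone : ∀ c : ℝ, 0 < c → c • K ⊆ K) (hK0 : (0 : Y) ∈ K)
    (hint : (interior K).Nonempty) (H : X → Y) {D : Set X} (hD : D.Nonempty)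
    (p : (X →L[ℝ] Y) × Y) :
    p ∈ epiConj K H D ↔ ∀ x ∈ D, p.2 + H x - p.1 x ∉ -interior K :=
  (exists_mem_wSupElems_sub_mem_iff hconv hcone hK0 hint (hD.image _) p.2).trans <| by
    simp only [forall_mem_image, sub_sub_eq_add_sub]

end WeakSupremum

section ConeConvex

variable {X Y : Type*} [AddCommGroup X] [Module ℝ X] [AddCommGroup Y] [Module ℝ Y]

def ConeConvexOn (K : Set Y) (s : Set X) (f : X → Y) : Prop :=
  Convex ℝ s ∧ ∀ ⦃x⦄, x ∈ s → ∀ ⦃x'⦄, x' ∈ s → ∀ ⦃a b : ℝ⦄, 0 ≤ a → 0 ≤ b → a + b = 1 →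
    a • f x + b • f x' - f (a • x + b • x') ∈ K

variable {K : Set Y} {s : Set X} {f : X → Y}

theorem coneConvexOn_of_convex_epigraph (hK0 : (0 : Y) ∈ K)
    (h : Convex ℝ {p : X × Y | p.1 ∈ s ∧ p.2 - f p.1 ∈ K}) : ConeConvexOn K s f := by
  have key : ∀ ⦃x⦄, x ∈ s → ∀ ⦃x'⦄, x' ∈ s → ∀ ⦃a b : ℝ⦄, 0 ≤ a → 0 ≤ b → a + b = 1 →
      a • x + b • x' ∈ s ∧ a • f x + b • f x' - f (a • x + b • x') ∈ K :=
    fun x hx x' hx' a b ha hb hab =>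
      h (x := (x, f x)) ⟨hx, by simpa using hK0⟩ (y := (x', f x')) ⟨hx', by simpa using hK0⟩
        ha hb hab
  exact ⟨fun x hx x' hx' a b ha hb hab => (key hx hx' ha hb hab).1,
    fun x hx x' hx' a b ha hb hab => (key hx hx' ha hb hab).2⟩

theorem ConeConvexOn.subset (h : ConeConvexOn K s f) {t : Set X} (hts : t ⊆ s)
    (ht : Convex ℝ t) : ConeConvexOn K t f :=
  ⟨ht, fun _ hx _ hx' _ _ ha hb hab => h.2 (hts hx) (hts hx') ha hb hab⟩

theorem ConeConvexOn.const_add_sub_linearMap (h : ConeConvexOn K s f) (c : Y) (L : X →ₗ[ℝ] Y) :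
    ConeConvexOn K s (fun x => c + f x - L x) := by
  refine ⟨h.1, fun x hx x' hx' a b ha hb hab => ?_⟩
  convert h.2 hx hx' ha hb hab using 1
  simp only [map_add, map_smul]
  linear_combination (norm := module) hab • c

end ConeConvex

section StrictImageSet

variable {X Y Z : Type*} [AddCommGroup Y] [Module ℝ Y] [TopologicalSpace Y] [AddCommGroup Z]
  [TopologicalSpace Z]

def strictImageSet (K : Set Y) (S : Set Z) (E : Set X) (H : X → Y) (G : X → Z) (e : Y) :
    Set (Z × ℝ) :=
  {q | ∃ x ∈ E, q.1 - G x ∈ interior S ∧ q.2 • e - H x ∈ interior K}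

variable {K : Set Y} {S : Set Z} {E : Set X} {H : X → Y} {G : X → Z}

theorem isOpen_strictImageSet [IsTopologicalAddGroup Y] [ContinuousSMul ℝ Y]
    [IsTopologicalAddGroup Z] (e : Y) : IsOpen (strictImageSet K S E H G e) := by
  have : strictImageSet K S E H G e = ⋃ x ∈ E, (fun q : Z × ℝ => q.1 - G x) ⁻¹' interior S ∩
      (fun q : Z × ℝ => q.2 • e - H x) ⁻¹' interior K := by
    ext q
    simp only [strictImageSet, mem_ofPred_eq, mem_iUnion, mem_inter_iff, mem_preimage, exists_prop]
  rw [this]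
  exact isOpen_biUnion fun x _ =>
    (isOpen_interior.preimage (by fun_prop)).inter (isOpen_interior.preimage (by fun_prop))

theorem convex_strictImageSet [AddCommGroup X] [Module ℝ X] [Module ℝ Z] [IsTopologicalAddGroup Y]
    [ContinuousSMul ℝ Y] [IsTopologicalAddGroup Z] [ContinuousSMul ℝ Z] (hKconv : Convex ℝ K)
    (hKcone : ∀ c : ℝ, 0 < c → c • K ⊆ K) (hSconv : Convex ℝ S)
    (hScone : ∀ c : ℝ, 0 < c → c • S ⊆ S) (hH : ConeConvexOn K E H) (hG : ConeConvexOn S E G)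
    (e : Y) : Convex ℝ (strictImageSet K S E H G e) := by
  rintro ⟨z₁, r₁⟩ ⟨x₁, hx₁, hz₁, hr₁⟩ ⟨z₂, r₂⟩ ⟨x₂, hx₂, hz₂, hr₂⟩ a b ha hb hab
  refine ⟨a • x₁ + b • x₂, hH.1 hx₁ hx₂ ha hb hab, ?_, ?_⟩
  · convert hSconv.interior_add_subset_of_cone hScone
      (add_mem_add (hSconv.interior hz₁ hz₂ ha hb hab) (hG.2 hx₁ hx₂ ha hb hab)) using 1
    simp only [Prod.fst_add, Prod.smul_fst]
    module
  · convert hKconv.interior_add_subset_of_cone hKcone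
      (add_mem_add (hKconv.interior hr₁ hr₂ ha hb hab) (hH.2 hx₁ hx₂ ha hb hab)) using 1
    simp only [Prod.snd_add, Prod.smul_snd, smul_eq_mul]
    module

end StrictImageSet

theorem exists_clm_pos_of_isOpen_convex {Z : Type*} [AddCommGroup Z] [Module ℝ Z]
    [TopologicalSpace Z] [IsTopologicalAddGroup Z] [ContinuousSMul ℝ Z] {D : Set (Z × ℝ)}
    (hDo : IsOpen D) (hDc : Convex ℝ D) (hD0 : (0 : Z × ℝ) ∉ D) {r₀ : ℝ} (hr₀ : 0 < r₀)
    (hr₀D : ((0 : Z), r₀) ∈ D) : ∃ ℓ : Z →L[ℝ] ℝ, ∀ q ∈ D, 0 < ℓ q.1 + q.2 := by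
  obtain ⟨ψ, hψ⟩ := geometric_hahn_banach_open_point hDc hDo hD0
  set α := ψ (0, 1)
  have hdecomp : ∀ q : Z × ℝ, ψ q = ψ (q.1, 0) + q.2 * α := by
    intro q
    rw [← smul_eq_mul, ← map_smul, ← map_add]
    congr 1
    ext <;> simp
  have hα : α < 0 := by
    have := hψ _ hr₀D
    rw [hdecomp, map_zero] at this
    simp only [Prod.mk_zero_zero, map_zero, zero_add] at this
    exact neg_of_mul_neg_right this hr₀.le
  refine ⟨α⁻¹ • ψ.comp (ContinuousLinearMap.inl ℝ Z ℝ), fun q hq => ?_⟩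
  have hq' : ψ (q.1, 0) + q.2 * α < 0 := by
    rw [← hdecomp, ← map_zero ψ]
    exact hψ q hq
  have := mul_pos_of_neg_of_neg (inv_lt_zero.2 hα) hq'
  rw [mul_add, mul_left_comm, inv_mul_cancel₀ hα.ne, mul_one] at this
  simpa using this

theorem exists_cone_lagrange_multiplier {X Y Z : Type*} [AddCommGroup X] [Module ℝ X]
    [AddCommGroup Y] [Module ℝ Y] [TopologicalSpace Y] [IsTopologicalAddGroup Y]
    [ContinuousSMul ℝ Y] [AddCommGroup Z] [Module ℝ Z] [TopologicalSpace Z]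
    [IsTopologicalAddGroup Z] [ContinuousSMul ℝ Z]
    {K : Set Y} (hKconv : Convex ℝ K) (hKcone : ∀ c : ℝ, 0 < c → c • K ⊆ K) (hK0 : (0 : Y) ∈ K)
    (hKint : (interior K).Nonempty) {S : Set Z} (hSconv : Convex ℝ S)
    (hScone : ∀ c : ℝ, 0 < c → c • S ⊆ S) {E : Set X} {H : X → Y} {G : X → Z}
    (hH : ConeConvexOn K E H) (hG : ConeConvexOn S E G) (hslater : ∃ x ∈ E, G x ∈ -interior S)
    (h : ∀ x ∈ E, G x ∈ -S → H x ∉ -interior K) :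
    ∃ T : Z →L[ℝ] Y, ⇑T '' S ⊆ K ∧ ∀ x ∈ E, H x + T (G x) ∉ -interior K := by
  obtain ⟨e, he⟩ := hKint
  obtain ⟨x₀, hx₀, hGx₀⟩ := hslater
  set D := strictImageSet K S E H G e
  have hD0 : (0 : Z × ℝ) ∉ D := by
    rintro ⟨x, hx, hGx, hHx⟩
    exact h x hx (show -G x ∈ S from interior_subset (by simpa using hGx)) (by simpa using hHx)
  obtain ⟨r₀, hr₀, hr₀pos⟩ :=
    ((eventually_smul_sub_mem_interior hKcone he (H x₀)).and (eventually_gt_atTop 0)).exists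
  have hslaterD : ∀ z, z - G x₀ ∈ interior S → (z, r₀) ∈ D := fun z hz => ⟨x₀, hx₀, hz, hr₀⟩
  obtain ⟨ℓ, hℓ⟩ := exists_clm_pos_of_isOpen_convex (isOpen_strictImageSet e)
    (convex_strictImageSet hKconv hKcone hSconv hScone hH hG e) hD0 hr₀pos
    (hslaterD 0 (by simpa using hGx₀))
  have hℓS : ∀ s ∈ S, 0 ≤ ℓ s := fun s hs =>
    (Real.nonneg_of_forall_pos_mul_add fun c hc => by
      have hcs : c • s - G x₀ ∈ interior S := by
        rw [sub_eq_add_neg, add_comm]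
        exact hSconv.interior_add_subset_of_cone hScone
          (add_mem_add hGx₀ (hScone c hc (smul_mem_smul_set hs)))
      simpa using hℓ _ (hslaterD _ hcs)).2
  refine ⟨ℓ.smulRight e, ?_, fun x hx hxK => ?_⟩
  · rintro _ ⟨s, hs, rfl⟩
    exact smul_mem_of_cone hK0 hKcone (hℓS s hs) (interior_subset he)
  have hxK' : (-ℓ (G x)) • e - H x ∈ interior K := by
    rw [Set.mem_neg, ContinuousLinearMap.smulRight_apply] at hxK
    rwa [neg_smul, ← neg_add', add_comm]
  have hnear : ∀ᶠ r in 𝓝 (-ℓ (G x)), r • e - H x ∈ interior K :=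
    (isOpen_interior.preimage (by fun_prop)).mem_nhds hxK'
  -- a level `r < -ℓ (G x)` that still works gives `(G x + δ • -G x₀, r) ∈ D` for all `δ > 0`,
  -- and `δ → 0` then contradicts the separation
  obtain ⟨r, hr, hrK⟩ := hnear.exists_lt
  have hnonneg :=
    (Real.nonneg_of_forall_pos_mul_add (a := ℓ (G x) + r) (b := ℓ (-G x₀)) fun δ hδ => by
      have hδS : G x + δ • -G x₀ - G x ∈ interior S := by
        rw [add_sub_cancel_left]
        exact smul_interior_subset_of_cone hScone hδ (smul_mem_smul_set hGx₀)
      have := hℓ (G x + δ • -G x₀, r) ⟨x, hx, hδS, hrK⟩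
      simp only [map_add, map_smul, smul_eq_mul] at this
      linarith).1
  linarith

theorem stmt11_general {X Y Z : Type*}
    [AddCommGroup X] [Module ℝ X] [TopologicalSpace X]
    [AddCommGroup Y] [Module ℝ Y] [TopologicalSpace Y] [IsTopologicalAddGroup Y]
    [ContinuousSMul ℝ Y]
    [AddCommGroup Z] [Module ℝ Z] [TopologicalSpace Z] [IsTopologicalAddGroup Z]
    [ContinuousSMul ℝ Z]
    (K : Set Y) (hKconv : Convex ℝ K)
    (hKcone : ∀ c : ℝ, 0 < c → c • K ⊆ K) (hK0 : (0:Y) ∈ K)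
    (hKint : (interior K).Nonempty)
    (S : Set Z) (hSconv : Convex ℝ S)
    (hScone : ∀ c : ℝ, 0 < c → c • S ⊆ S) (hS0 : (0:Z) ∈ S)
    (C : Set X) (hCconv : Convex ℝ C)
    (F : X → Y) (domF : Set X)
    (hFconv : Convex ℝ {p : X × Y | p.1 ∈ domF ∧ p.2 - F p.1 ∈ K})
    (G : X → Z) (domG : Set X)
    (hGconv : Convex ℝ {p : X × Z | p.1 ∈ domG ∧ p.2 - G p.1 ∈ S})
    (A : Set X) (hA : A = {x | x ∈ C ∧ x ∈ domG ∧ G x ∈ -S})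
    (hAF : (A ∩ domF).Nonempty)
    (hslater : ∃ x' ∈ C ∩ domF, x' ∈ domG ∧ G x' ∈ -(interior S)) :
    epiConj K F (A ∩ domF) =
      ⋃ T ∈ {T : Z →L[ℝ] Y | ⇑T '' S ⊆ K},
        epiConj K (fun x => F x + T (G x)) (C ∩ domF ∩ domG) := by
  have hF := coneConvexOn_of_convex_epigraph hK0 hFconv
  have hG := coneConvexOn_of_convex_epigraph hS0 hGconv
  have hE : Convex ℝ (C ∩ domF ∩ domG) := (hCconv.inter hF.1).inter hG.1
  obtain ⟨x₀, hx₀, hx₀G, hGx₀⟩ := hslater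
  have hAF' : A ∩ domF = {x ∈ C ∩ domF ∩ domG | G x ∈ -S} := by
    ext; simp only [hA, mem_inter_iff, mem_ofPred_eq]; tauto
  have hchar := mem_epiConj_iff hKconv hKcone hK0 hKint (X := X)
  ext p
  rw [hchar _ hAF, hAF']
  simp only [mem_iUnion, exists_prop, mem_ofPred_eq,
    hchar _ (⟨x₀, hx₀, hx₀G⟩ : (C ∩ domF ∩ domG).Nonempty)]
  constructor
  · intro h
    obtain ⟨T, hT, hTp⟩ := exists_cone_lagrange_multiplier hKconv hKcone hK0 hKint hSconv hScone
      ((hF.subset (inter_subset_left.trans inter_subset_right) hE).const_add_sub_linearMap p.2 p.1)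
      (hG.subset inter_subset_right hE) ⟨x₀, ⟨hx₀, hx₀G⟩, hGx₀⟩ fun x hx hGx => h x ⟨hx, hGx⟩
    refine ⟨T, hT, fun x hx => ?_⟩
    convert hTp x hx using 2
    simp only [ContinuousLinearMap.coe_coe]
    abel
  · rintro ⟨T, hT, hp⟩ x ⟨hx, hGx⟩ hxK
    have hTG : -T (G x) ∈ K := by simpa using hT (mem_image_of_mem T hGx)
    refine hp x hx ?_
    rw [Set.mem_neg] at hxK ⊢
    convert hKconv.interior_add_subset_of_cone hKcone (add_mem_add hxK hTG) using 1
    abel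

theorem stmt11 {X Y Z : Type*}
    [AddCommGroup X] [Module ℝ X] [TopologicalSpace X] [IsTopologicalAddGroup X]
    [ContinuousSMul ℝ X] [T2Space X] [LocallyConvexSpace ℝ X]
    [AddCommGroup Y] [Module ℝ Y] [TopologicalSpace Y] [IsTopologicalAddGroup Y]
    [ContinuousSMul ℝ Y] [T2Space Y] [LocallyConvexSpace ℝ Y]
    [AddCommGroup Z] [Module ℝ Z] [TopologicalSpace Z] [IsTopologicalAddGroup Z]
    [ContinuousSMul ℝ Z] [T2Space Z] [LocallyConvexSpace ℝ Z]
    (K : Set Y) (hKcl : IsClosed K) (hKconv : Convex ℝ K)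
    (hKcone : ∀ c : ℝ, 0 < c → c • K ⊆ K) (hK0 : (0:Y) ∈ K)
    (hKpointed : K ∩ (-K) ⊆ {0}) (hKint : (interior K).Nonempty)
    (S : Set Z) (hScl : IsClosed S) (hSconv : Convex ℝ S)
    (hScone : ∀ c : ℝ, 0 < c → c • S ⊆ S) (hS0 : (0:Z) ∈ S)
    (C : Set X) (hCne : C.Nonempty) (hCconv : Convex ℝ C)
    (F : X → Y) (domF : Set X) (hFprop : domF.Nonempty)
    (hFconv : Convex ℝ {p : X × Y | p.1 ∈ domF ∧ p.2 - F p.1 ∈ K})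
    (G : X → Z) (domG : Set X) (hGprop : domG.Nonempty)
    (hGconv : Convex ℝ {p : X × Z | p.1 ∈ domG ∧ p.2 - G p.1 ∈ S})
    (A : Set X) (hA : A = {x | x ∈ C ∧ x ∈ domG ∧ G x ∈ -S})
    (hAF : (A ∩ domF).Nonempty)
    (hslater : ∃ x' ∈ C ∩ domF, x' ∈ domG ∧ G x' ∈ -(interior S)) :
    epiConj K F (A ∩ domF) =
      ⋃ T ∈ {T : Z →L[ℝ] Y | ⇑T '' S ⊆ K},
        epiConj K (fun x => F x + T (G x)) (C ∩ domF ∩ domG) :=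
  stmt11_general K hKconv hKcone hK0 hKint S hSconv hScone hS0 C hCconv F domF hFconv G domG hGconv
    A hA hAF hslater
end

section
/- (Optimality condition) Let x̄ ∈ A ∩ dom F, where A = C ∩ G⁻¹(−S). Assume C nonempty convex, F proper K-convex, G proper S-convex, and the Slater condition: ∃ x̂ ∈ C ∩ dom F with G(x̂) ∈ −int S. Then x̄ is a weakly minimal solution of WMin{F(x) : x ∈ C, G(x) ∈ −S} (i.e., there is no x ∈ A with F(x) − F(x̄) ∈ −int K) if and only if there exists T ∈ L₊(S,K) such that F(x) + (T∘G)(x) − F(x̄) ∉ −int K for all x ∈ C. -/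
/-!
Weak minimality of `xbar` says that the convex set
`B = {(G x, F x - F xbar) | x ∈ C ∩ domF ∩ domG} + S × K` misses the open convex cone
`(-int S) × (-int K)`. A separating functional `(z, y) ↦ g z + h y`, nonnegative on `B` and
negative on the cone, has `g ≥ 0` on `S` and `h ≥ 0` on `K`; the Slater point rules out `h = 0`,
so `h > 0` on `int K`, and for any `k₀ ∈ int K` the map `T z = (g z / h k₀) • k₀` is the
multiplier. The converse holds because `int K + K ⊆ int K`.
-/

open Set Pointwise Topology

section ConvexCone

variable {E : Type*} [AddCommGroup E] [Module ℝ E] {K : Set E}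

lemma add_mem_of_convex_of_smul_subset (hconv : Convex ℝ K)
    (hcone : ∀ c : ℝ, 0 < c → c • K ⊆ K) {a b : E} (ha : a ∈ K) (hb : b ∈ K) : a + b ∈ K := by
  have hmid := hconv ha hb (by norm_num : (0 : ℝ) ≤ 1 / 2) (by norm_num : (0 : ℝ) ≤ 1 / 2)
    (by norm_num)
  have h2 := hcone 2 two_pos (smul_mem_smul_set hmid)
  rwa [smul_add, smul_smul, smul_smul, show (2 : ℝ) * (1 / 2) = 1 by norm_num, one_smul,
    one_smul] at h2

lemma smul_mem_of_nonneg_of_smul_subset (hK0 : (0 : E) ∈ K)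
    (hcone : ∀ c : ℝ, 0 < c → c • K ⊆ K) {c : ℝ} (hc : 0 ≤ c) {k : E} (hk : k ∈ K) :
    c • k ∈ K := by
  rcases hc.eq_or_lt with rfl | hc
  · rwa [zero_smul]
  · exact hcone c hc (smul_mem_smul_set hk)

variable [TopologicalSpace E]

lemma smul_mem_interior_of_smul_subset [ContinuousConstSMul ℝ E]
    (hcone : ∀ c : ℝ, 0 < c → c • K ⊆ K) {t : ℝ} (ht : 0 < t) {a : E} (ha : a ∈ interior K) :
    t • a ∈ interior K := by
  have : t • a ∈ interior (t • K) := by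
    rw [interior_smul₀ ht.ne']
    exact smul_mem_smul_set ha
  exact interior_mono (hcone t ht) this

variable [IsTopologicalAddGroup E]

lemma add_mem_interior_of_convex_of_smul_subset (hconv : Convex ℝ K)
    (hcone : ∀ c : ℝ, 0 < c → c • K ⊆ K) {a b : E} (ha : a ∈ interior K) (hb : b ∈ K) :
    a + b ∈ interior K := by
  refine interior_maximal ?_ isOpen_interior.add_right (add_mem_add ha hb)
  rintro _ ⟨x, hx, y, hy, rfl⟩
  exact add_mem_of_convex_of_smul_subset hconv hcone (interior_subset hx) hy

lemma mem_neg_interior_of_sub_mem (hconv : Convex ℝ K) (hcone : ∀ c : ℝ, 0 < c → c • K ⊆ K)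
    {a b : E} (ha : a ∈ -interior K) (hab : a - b ∈ K) : b ∈ -interior K := by
  have := add_mem_interior_of_convex_of_smul_subset hconv hcone ha hab
  rwa [show -a + (a - b) = -b by abel] at this

lemma StrongDual.pos_of_nonneg_of_mem_interior [ContinuousSMul ℝ E] {φ : StrongDual ℝ E}
    (hφ : φ ≠ 0) (hK : ∀ k ∈ K, 0 ≤ φ k) {k : E} (hk : k ∈ interior K) : 0 < φ k := by
  refine (hK k (interior_subset hk)).lt_of_ne' fun hφk => hφ (ContinuousLinearMap.ext fun y => ?_)
  -- `t ↦ φ (k + t • y)` has a local minimum at `0`, so its derivative `φ y` vanishes.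
  have hline : ∀ᶠ t in 𝓝 (0 : ℝ), k + t • y ∈ K := by
    have hcont : Continuous fun t : ℝ => k + t • y := by fun_prop
    exact hcont.continuousAt.preimage_mem_nhds (by simpa using mem_interior_iff_mem_nhds.mp hk)
  have hmin : IsLocalMin (fun t : ℝ => φ (k + t • y)) 0 := by
    filter_upwards [hline] with t ht
    simpa [hφk] using hK _ ht
  have hderiv : HasDerivAt (fun t : ℝ => φ (k + t • y)) (φ y) 0 := by
    simp only [map_add, map_smul, smul_eq_mul]
    simpa using ((hasDerivAt_id (0 : ℝ)).mul_const (φ y)).const_add (φ k)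
  simpa using hmin.hasDerivAt_eq_zero hderiv

end ConvexCone

lemma geometric_hahn_banach_open_cone {E : Type*} [TopologicalSpace E] [AddCommGroup E]
    [Module ℝ E] [IsTopologicalAddGroup E] [ContinuousSMul ℝ E] {U B : Set E}
    (hUconv : Convex ℝ U) (hUopen : IsOpen U) (hUcone : ∀ c : ℝ, 0 < c → c • U ⊆ U)
    (hBconv : Convex ℝ B) (hB0 : (0 : E) ∈ B) (hdisj : Disjoint U B) :
    ∃ f : StrongDual ℝ E, (∀ u ∈ U, f u < 0) ∧ ∀ b ∈ B, 0 ≤ f b := by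
  obtain ⟨f, c, hfU, hfB⟩ := geometric_hahn_banach_open hUconv hUopen hBconv hdisj
  have hc0 : c ≤ 0 := by simpa using hfB 0 hB0
  rcases U.eq_empty_or_nonempty with rfl | ⟨u, hu⟩
  · exact ⟨0, by simp, by simp⟩
  -- Otherwise `(c / f u) • u ∈ U` would have `f`-value exactly `c`.
  have hc : 0 ≤ c := by
    by_contra! hc
    have hfu : f u < 0 := (hfU u hu).trans hc
    have := hfU _ (hUcone _ (div_pos_of_neg_of_neg hc hfu) (smul_mem_smul_set hu))
    rw [map_smul, smul_eq_mul, div_mul_cancel₀ _ hfu.ne] at this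
    exact this.false
  exact ⟨f, fun u hu => (hfU u hu).trans_le hc0, fun b hb => hc.trans (hfB b hb)⟩

lemma convex_setOf_exists_prod_mem {X Y Z : Type*} [AddCommGroup X] [Module ℝ X]
    [AddCommGroup Y] [Module ℝ Y] [AddCommGroup Z] [Module ℝ Z] {C : Set X}
    {P : Set (X × Z)} {Q : Set (X × Y)} (hC : Convex ℝ C) (hP : Convex ℝ P) (hQ : Convex ℝ Q)
    (y₀ : Y) : Convex ℝ {p : Z × Y | ∃ x ∈ C, (x, p.1) ∈ P ∧ (x, p.2 + y₀) ∈ Q} := by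
  rintro ⟨z₁, y₁⟩ ⟨x₁, hx₁, hP₁, hQ₁⟩ ⟨z₂, y₂⟩ ⟨x₂, hx₂, hP₂, hQ₂⟩ a b ha hb hab
  refine ⟨a • x₁ + b • x₂, hC hx₁ hx₂ ha hb hab, hP hP₁ hP₂ ha hb hab, ?_⟩
  convert hQ hQ₁ hQ₂ ha hb hab using 1
  simp only [Prod.smul_mk, Prod.mk_add_mk, smul_add, Prod.mk.injEq, true_and]
  rw [add_add_add_comm, ← add_smul, hab, one_smul]

section Multiplier

variable {Y Z : Type*}
    [AddCommGroup Y] [Module ℝ Y] [TopologicalSpace Y] [IsTopologicalAddGroup Y]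
    [ContinuousSMul ℝ Y]
    [AddCommGroup Z] [Module ℝ Z] [TopologicalSpace Z] [IsTopologicalAddGroup Z]
    [ContinuousSMul ℝ Z]
    {K : Set Y} {S : Set Z}

theorem exists_nonneg_functionals_of_disjoint (hKconv : Convex ℝ K)
    (hKcone : ∀ c : ℝ, 0 < c → c • K ⊆ K) (hK0 : (0 : Y) ∈ K)
    (hSconv : Convex ℝ S) (hScone : ∀ c : ℝ, 0 < c → c • S ⊆ S) (hS0 : (0 : Z) ∈ S)
    {B : Set (Z × Y)} (hBconv : Convex ℝ B) (hSK : S ×ˢ K ⊆ B)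
    (hdisj : Disjoint ((-interior S) ×ˢ (-interior K)) B) :
    ∃ (g : StrongDual ℝ Z) (h : StrongDual ℝ Y), (∀ s ∈ S, 0 ≤ g s) ∧ (∀ k ∈ K, 0 ≤ h k) ∧
      (∀ p ∈ B, 0 ≤ g p.1 + h p.2) ∧ ∀ s ∈ interior S, ∀ k ∈ interior K, 0 < g s + h k := by
  have hUcone : ∀ c : ℝ, 0 < c →
      c • ((-interior S) ×ˢ (-interior K)) ⊆ (-interior S) ×ˢ (-interior K) := by
    rintro c hc _ ⟨p, ⟨hp₁, hp₂⟩, rfl⟩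
    constructor
    · simpa [← smul_neg] using smul_mem_interior_of_smul_subset hScone hc hp₁
    · simpa [← smul_neg] using smul_mem_interior_of_smul_subset hKcone hc hp₂
  obtain ⟨f, hfU, hfB⟩ := geometric_hahn_banach_open_cone
    (hSconv.interior.neg.prod hKconv.interior.neg) (isOpen_interior.neg.prod isOpen_interior.neg)
    hUcone hBconv (hSK ⟨hS0, hK0⟩) hdisj
  set g := f ∘L .inl ℝ Z Y
  set h := f ∘L .inr ℝ Z Y
  have hf : ∀ p : Z × Y, f p = g p.1 + h p.2 := fun p => by
    simp only [g, h, ContinuousLinearMap.comp_apply, ContinuousLinearMap.inl_apply,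
      ContinuousLinearMap.inr_apply, ← map_add, Prod.mk_add_mk, add_zero, zero_add]
  refine ⟨g, h, fun s hs => by simpa [hf] using hfB (s, 0) (hSK ⟨hs, hK0⟩),
    fun k hk => by simpa [hf] using hfB (0, k) (hSK ⟨hS0, hk⟩), fun p hp => hf p ▸ hfB p hp,
    fun s hs k hk => ?_⟩
  have := hfU (-s, -k) ⟨by simpa using hs, by simpa using hk⟩
  rw [hf, map_neg, map_neg] at this
  linarith

theorem exists_lagrange_multiplier_of_disjoint (hKconv : Convex ℝ K)
    (hKcone : ∀ c : ℝ, 0 < c → c • K ⊆ K) (hK0 : (0 : Y) ∈ K) (hKint : (interior K).Nonempty)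
    (hSconv : Convex ℝ S) (hScone : ∀ c : ℝ, 0 < c → c • S ⊆ S) (hS0 : (0 : Z) ∈ S)
    {B : Set (Z × Y)} (hBconv : Convex ℝ B) (hSK : S ×ˢ K ⊆ B)
    (hdisj : Disjoint ((-interior S) ×ˢ (-interior K)) B)
    (hslater : ∃ p ∈ B, -p.1 ∈ interior S) :
    ∃ T : Z →L[ℝ] Y, ⇑T '' S ⊆ K ∧ ∀ p ∈ B, p.2 + T p.1 ∉ -interior K := by
  obtain ⟨g, h, hgS, hhK, hB, hpos⟩ :=
    exists_nonneg_functionals_of_disjoint hKconv hKcone hK0 hSconv hScone hS0 hBconv hSK hdisj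
  obtain ⟨k₀, hk₀⟩ := hKint
  have hh : h ≠ 0 := by
    rintro rfl
    obtain ⟨p, hpB, hp⟩ := hslater
    have hneg := hpos _ hp k₀ hk₀
    have hnonneg := hB p hpB
    simp only [map_neg, zero_apply, add_zero] at hneg hnonneg
    linarith
  have hhint : ∀ k ∈ interior K, 0 < h k := fun k hk =>
    StrongDual.pos_of_nonneg_of_mem_interior hh hhK hk
  set T : Z →L[ℝ] Y := (h k₀)⁻¹ • g.smulRight k₀
  have hT : ∀ z, T z = ((h k₀)⁻¹ * g z) • k₀ := fun z => by
    simp [T, smul_smul]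
  have hhT : ∀ z, h (T z) = g z := fun z => by
    rw [hT, map_smul, smul_eq_mul, mul_comm, ← mul_assoc, mul_inv_cancel₀ (hhint k₀ hk₀).ne',
      one_mul]
  refine ⟨T, ?_, fun p hp hmem => ?_⟩
  · rintro _ ⟨s, hs, rfl⟩
    rw [hT]
    exact smul_mem_of_nonneg_of_smul_subset hK0 hKcone
      (mul_nonneg (inv_nonneg.mpr (hhint k₀ hk₀).le) (hgS s hs)) (interior_subset hk₀)
  · have := hhint _ (Set.mem_neg.mp hmem)
    rw [map_neg, map_add, hhT] at this
    linarith [hB p hp]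

end Multiplier

lemma add_map_mem_neg_interior {Y Z : Type*} [AddCommGroup Y] [Module ℝ Y] [TopologicalSpace Y]
    [IsTopologicalAddGroup Y] [AddCommGroup Z] [Module ℝ Z] [TopologicalSpace Z] {K : Set Y}
    {S : Set Z} (hKconv : Convex ℝ K) (hKcone : ∀ c : ℝ, 0 < c → c • K ⊆ K)
    {T : Z →L[ℝ] Y} (hTS : ⇑T '' S ⊆ K) {y : Y} {z : Z} (hy : y ∈ -interior K) (hz : z ∈ -S) :
    y + T z ∈ -interior K := by
  have := add_mem_interior_of_convex_of_smul_subset hKconv hKcone hy (hTS ⟨_, hz, rfl⟩)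
  rwa [map_neg, ← neg_add] at this

theorem stmt17_general {X Y Z : Type*}
    [AddCommGroup X] [Module ℝ X]
    [AddCommGroup Y] [Module ℝ Y] [TopologicalSpace Y] [IsTopologicalAddGroup Y]
    [ContinuousSMul ℝ Y]
    [AddCommGroup Z] [Module ℝ Z] [TopologicalSpace Z] [IsTopologicalAddGroup Z]
    [ContinuousSMul ℝ Z]
    (K : Set Y) (hKconv : Convex ℝ K)
    (hKcone : ∀ c : ℝ, 0 < c → c • K ⊆ K) (hK0 : (0:Y) ∈ K)
    (hKint : (interior K).Nonempty)
    (S : Set Z) (hSconv : Convex ℝ S)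
    (hScone : ∀ c : ℝ, 0 < c → c • S ⊆ S) (hS0 : (0:Z) ∈ S)
    (C : Set X) (hCconv : Convex ℝ C)
    (F : X → Y) (domF : Set X)
    (hFconv : Convex ℝ {p : X × Y | p.1 ∈ domF ∧ p.2 - F p.1 ∈ K})
    (G : X → Z) (domG : Set X)
    (hGconv : Convex ℝ {p : X × Z | p.1 ∈ domG ∧ p.2 - G p.1 ∈ S})
    (A : Set X) (hA : A = {x | x ∈ C ∧ x ∈ domG ∧ G x ∈ -S})
    (hslater : ∃ x' ∈ C ∩ domF, x' ∈ domG ∧ G x' ∈ -(interior S))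
    (xbar : X) (hxbar : xbar ∈ A ∩ domF) :
    (¬ ∃ x, x ∈ C ∧ x ∈ domG ∧ G x ∈ -S ∧ x ∈ domF ∧
        F x - F xbar ∈ -(interior K)) ↔
      ∃ T : Z →L[ℝ] Y, ⇑T '' S ⊆ K ∧
        ∀ x ∈ C, x ∈ domF → x ∈ domG →
          F x + T (G x) - F xbar ∉ -(interior K) := by
  obtain ⟨⟨hxbarC, hxbarG, hxbarS⟩, hxbarF⟩ := hA ▸ hxbar
  obtain ⟨xh, ⟨hxhC, hxhF⟩, hxhG, hxhS⟩ := hslater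
  set B : Set (Z × Y) := {p | ∃ x ∈ C, (x, p.1) ∈ {p : X × Z | p.1 ∈ domG ∧ p.2 - G p.1 ∈ S} ∧
    (x, p.2 + F xbar) ∈ {p : X × Y | p.1 ∈ domF ∧ p.2 - F p.1 ∈ K}}
  have hmemB : ∀ x ∈ C, x ∈ domF → x ∈ domG → (G x, F x - F xbar) ∈ B := fun x hxC hxF hxG =>
    ⟨x, hxC, ⟨hxG, by simpa using hS0⟩, ⟨hxF, by simpa using hK0⟩⟩
  constructor
  · intro hmin
    have hSK : S ×ˢ K ⊆ B := by
      rintro ⟨s, k⟩ ⟨hs, hk⟩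
      refine ⟨xbar, hxbarC, ⟨hxbarG, ?_⟩, ⟨hxbarF, by simpa using hk⟩⟩
      simpa [sub_eq_add_neg] using add_mem_of_convex_of_smul_subset hSconv hScone hs hxbarS
    have hdisj : Disjoint ((-interior S) ×ˢ (-interior K)) B := by
      refine Set.disjoint_left.mpr ?_
      rintro ⟨z, y⟩ ⟨hz, hy⟩ ⟨x, hxC, ⟨hxG, hzS⟩, ⟨hxF, hyK⟩⟩
      rw [← sub_sub_eq_add_sub] at hyK
      exact hmin ⟨x, hxC, hxG, Set.neg_subset_neg.mpr interior_subset
        (mem_neg_interior_of_sub_mem hSconv hScone hz hzS), hxF,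
        mem_neg_interior_of_sub_mem hKconv hKcone hy hyK⟩
    obtain ⟨T, hTS, hT⟩ := exists_lagrange_multiplier_of_disjoint hKconv hKcone hK0 hKint
      hSconv hScone hS0 (convex_setOf_exists_prod_mem hCconv hGconv hFconv (F xbar)) hSK hdisj
      ⟨_, hmemB xh hxhC hxhF hxhG, hxhS⟩
    refine ⟨T, hTS, fun x hxC hxF hxG hx => hT _ (hmemB x hxC hxF hxG) ?_⟩
    rwa [← sub_add_eq_add_sub] at hx
  · rintro ⟨T, hTS, hT⟩ ⟨x, hxC, hxG, hxS, hxF, hx⟩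
    refine hT x hxC hxF hxG ?_
    rw [← sub_add_eq_add_sub]
    exact add_map_mem_neg_interior hKconv hKcone hTS hx hxS

theorem stmt17 {X Y Z : Type*}
    [AddCommGroup X] [Module ℝ X] [TopologicalSpace X] [IsTopologicalAddGroup X]
    [ContinuousSMul ℝ X] [T2Space X] [LocallyConvexSpace ℝ X]
    [AddCommGroup Y] [Module ℝ Y] [TopologicalSpace Y] [IsTopologicalAddGroup Y]
    [ContinuousSMul ℝ Y] [T2Space Y] [LocallyConvexSpace ℝ Y]
    [AddCommGroup Z] [Module ℝ Z] [TopologicalSpace Z] [IsTopologicalAddGroup Z]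
    [ContinuousSMul ℝ Z] [T2Space Z] [LocallyConvexSpace ℝ Z]
    (K : Set Y) (hKcl : IsClosed K) (hKconv : Convex ℝ K)
    (hKcone : ∀ c : ℝ, 0 < c → c • K ⊆ K) (hK0 : (0:Y) ∈ K)
    (hKpointed : K ∩ (-K) ⊆ {0}) (hKint : (interior K).Nonempty)
    (S : Set Z) (hScl : IsClosed S) (hSconv : Convex ℝ S)
    (hScone : ∀ c : ℝ, 0 < c → c • S ⊆ S) (hS0 : (0:Z) ∈ S)
    (C : Set X) (hCne : C.Nonempty) (hCconv : Convex ℝ C)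
    (F : X → Y) (domF : Set X) (hFprop : domF.Nonempty)
    (hFconv : Convex ℝ {p : X × Y | p.1 ∈ domF ∧ p.2 - F p.1 ∈ K})
    (G : X → Z) (domG : Set X) (hGprop : domG.Nonempty)
    (hGconv : Convex ℝ {p : X × Z | p.1 ∈ domG ∧ p.2 - G p.1 ∈ S})
    (A : Set X) (hA : A = {x | x ∈ C ∧ x ∈ domG ∧ G x ∈ -S})
    (hAF : (A ∩ domF).Nonempty)
    (hslater : ∃ x' ∈ C ∩ domF, x' ∈ domG ∧ G x' ∈ -(interior S))
    (xbar : X) (hxbar : xbar ∈ A ∩ domF) :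
    (¬ ∃ x, x ∈ C ∧ x ∈ domG ∧ G x ∈ -S ∧ x ∈ domF ∧
        F x - F xbar ∈ -(interior K)) ↔
      ∃ T : Z →L[ℝ] Y, ⇑T '' S ⊆ K ∧
        ∀ x ∈ C, x ∈ domF → x ∈ domG →
          F x + T (G x) - F xbar ∉ -(interior K) :=
  stmt17_general K hKconv hKcone hK0 hKint S hSconv hScone hS0 C hCconv F domF hFconv G domG hGconv
    A hA hslater xbar hxbar
end
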